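/- For every k-colored permutation π of length n, Fomin's growth rules applied to the square diagram of π are well-defined and consistent: every corner of the n×n array receives a unique label in Z(k); along every horizontal or vertical edge of the array the two corner labels are either equal or form a cover relation in Z(k); and the sequences of labels read bottom-to-top up the right edge and left-to-right along the top edge are both saturated chains in Z(k) from the empty word ∅ to the same word of rank n (the label of the top-right corner). -/

import Mathlib

/-!
Once each of the edges `ν μ₁` and `ν μ₂` of a square is known to be an equality or a cover,
the rules leave exactly one choice for the top-right label, so the labeling is computed
square by square. What keeps the rules applicable is an invariant: the vertical edge at
`(c, r)` is a cover exactly when row `r` has an `X` left of column `c`, and the horizontal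
edge at `(c, r)` is a cover exactly when column `c` has an `X` below row `r`, and is an
equality otherwise. It passes across a square because a row or column of a permutation
diagram holds exactly one `X`, and a cover `ν ⋖ μ` gives a cover `μ ⋖ 2ν`. Along the right
and top edges of the array every row and column has met its `X`, so all their edges are
covers; each cover raises the rank by one.
-/
namespace KRF

/-- A letter of the alphabet `{1_1, …, 1_k, 2}`:  `one j` stands for the letter `1_j`
(with `1 ≤ j ≤ k` for genuine letters), and `two` stands for the letter `2`. -/
inductive Letter (k : ℕ) : Type where
  | one : ℕ → Letter k
  | two : Letter k
deriving DecidableEq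

/-- A word over the alphabet `{1_1, …, 1_k, 2}`, listed from the leftmost letter to the
rightmost letter. -/
abbrev Word (k : ℕ) := List (Letter k)

/-- The contribution of a letter to the rank: each `1_j` counts `1` and each `2` counts `2`. -/
def Letter.rank {k : ℕ} : Letter k → ℕ
  | .one _ => 1
  | .two => 2

/-- The rank of a word: the sum of its letters. -/
def Word.rank {k : ℕ} (w : Word k) : ℕ := (w.map Letter.rank).sum

/-- The letter `1_j` is valid when `1 ≤ j ≤ k`. -/
def Letter.Valid (k : ℕ) : Letter k → Prop
  | .one j => 1 ≤ j ∧ j ≤ k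
  | .two => True

/-- A genuine word of the Fibonacci poset `Z(k)`: all of its letters are valid. -/
def Word.Valid (k : ℕ) (w : Word k) : Prop := ∀ l ∈ w, l.Valid k

/-- The cover relation of the Fibonacci poset `Z(k)`:  `z` is covered by `w` iff `z` is
obtained from `w` either by changing a `2` into some `1_j` when all letters to the left of
that `2` are `2`'s, or by deleting the leftmost letter of the form `1_j`. -/
def ZCovers (k : ℕ) (z w : Word k) : Prop :=
  (∃ (p s : Word k) (j : ℕ), (∀ l ∈ p, l = Letter.two) ∧ 1 ≤ j ∧ j ≤ k ∧
      w = p ++ Letter.two :: s ∧ z = p ++ Letter.one j :: s) ∨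
  (∃ (p s : Word k) (j : ℕ), (∀ l ∈ p, l = Letter.two) ∧ 1 ≤ j ∧ j ≤ k ∧
      w = p ++ Letter.one j :: s ∧ z = p ++ s)

/-- `c 0 ⋖ c 1 ⋖ ⋯ ⋖ c n` is a saturated chain in `Z(k)` starting at the empty word. -/
def IsZChain (k n : ℕ) (c : ℕ → Word k) : Prop :=
  c 0 = [] ∧ ∀ i, i < n → ZCovers k (c i) (c (i + 1))

end KRF
namespace KRF

/-- A column of a (tiled and filled) `k`-ribbon Fibonacci tableau.
`single h v` is a column of height 1 (shape letter `1_h`) tiled by one `k`-ribbon of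
height `h` filled with the value `v`.
`double ht hb vt vb` is a column of height 2 (shape letter `2`) tiled by a `k`-ribbon of
height `ht` filled with `vt` stacked on top of a `k`-ribbon of height `hb` (always
`hb = k + 1 - ht` for genuine tableaux) filled with `vb`. -/
inductive Col (k : ℕ) : Type where
  | single : ℕ → ℕ → Col k
  | double : ℕ → ℕ → ℕ → ℕ → Col k
deriving DecidableEq

/-- A (tiled, filled) `k`-ribbon Fibonacci tableau: its list of columns, from the leftmost
column to the rightmost one. -/
abbrev Tab (k : ℕ) := List (Col k)

/-- The shape letter of a column. -/
def Col.shape {k : ℕ} : Col k → Letter k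
  | .single h _ => Letter.one h
  | .double _ _ _ _ => Letter.two

/-- The `k`-ribbon Fibonacci shape (a word) underlying a tableau. -/
def Tab.shape {k : ℕ} (T : Tab k) : Word k := T.map Col.shape

/-- The value in the bottom `k`-ribbon of a column. -/
def Col.bottomVal {k : ℕ} : Col k → ℕ
  | .single _ v => v
  | .double _ _ _ vb => vb

/-- The heights occurring in a column are genuine ribbon heights: between `1` and `k`,
and in a column of height 2 the two heights sum to `k + 1`. -/
def Col.HeightsValid (k : ℕ) : Col k → Prop
  | .single h _ => 1 ≤ h ∧ h ≤ k
  | .double ht hb _ _ => 1 ≤ ht ∧ ht ≤ k ∧ hb = k + 1 - ht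

/-- The list of all entries of a tableau (one for each `k`-ribbon). -/
def Tab.entries {k : ℕ} (T : Tab k) : List ℕ :=
  (T.map fun c => match c with
    | Col.single _ v => [v]
    | Col.double _ _ vt vb => [vt, vb]).flatten

/-- The list of the bottom-ribbon values of the columns of a tableau. -/
def Tab.bottoms {k : ℕ} (T : Tab k) : List ℕ := T.map Col.bottomVal

/-- `T` is a standard `k`-ribbon Fibonacci tableau with entries `1, …, n`:
heights are valid, the entries are exactly `1, …, n`,  and the tableau can be built by
placing `n, n-1, …, 1` in order, each new `k`-ribbon being either appended (as a new
rightmost height-1 column) to the shape formed by the `k`-ribbons containing larger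
entries, or stacked on top of a single such `k`-ribbon.  Equivalently (and this is how we
formalize it): the bottom entries strictly decrease from left to right (in particular the
`k`-ribbon containing the leftmost square of the bottom row contains `n`), and in each
column of height 2 the top entry is smaller than the bottom entry. -/
def IsStandardTab (k n : ℕ) (T : Tab k) : Prop :=
  (∀ c ∈ T, Col.HeightsValid k c) ∧
  (Tab.entries T).Perm (List.range' 1 n) ∧
  List.Chain' (fun a b => b < a) (Tab.bottoms T) ∧
  (∀ c ∈ T, ∀ ht hb vt vb, c = Col.double ht hb vt vb → vt < vb)

/-- Updating a (partial) path tableau along one cover step `z ⋖ w` of `Z(k)`, placing the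
value `i` in the `k` new squares of `w` relative to `z`:  if `w` is obtained from `z` by
inserting a letter `1_j` after the prefix of `2`'s, a new height-1 column with a single
ribbon of height `j` filled with `i` is created there; if `w` is obtained from `z` by
changing the letter `1_h` just after the prefix of `2`'s into a `2`, the `k` new squares
of that column form a `k`-ribbon of height `k + 1 - h` filled with `i`, stacked on top of
the already present `k`-ribbon of height `h`. -/
def updateTab (k : ℕ) (i : ℕ) : Word k → Word k → Tab k → Tab k
  | Letter.two :: z', Letter.two :: w', c :: T => c :: updateTab k i z' w' T
  | Letter.one h :: _, Letter.two :: _, Col.single _ v :: T =>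
      Col.double (k + 1 - h) h i v :: T
  | z, Letter.one j :: w', T => if z = w' then Col.single j i :: T else T
  | _, _, T => T

/-- The `k`-ribbon Fibonacci path tableau determined by a saturated chain in `Z(k)`:
for each `i = 1, …, n` the value `i` is placed in the `k` new squares of `c i` relative
to `c (i-1)`. -/
def chainTab (k : ℕ) (c : ℕ → Word k) : ℕ → Tab k
  | 0 => []
  | m + 1 => updateTab k (m + 1) (c m) (c (m + 1)) (chainTab k c m)

/-- `T` is a `k`-ribbon Fibonacci path tableau with entries `1, …, n`: it is obtained
from some saturated chain `∅ = c 0 ⋖ c 1 ⋖ ⋯ ⋖ c n` in `Z(k)` by placing `i`'s in the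
`k` new squares created at the `i`-th step. -/
def IsPathTab (k n : ℕ) (T : Tab k) : Prop :=
  ∃ c : ℕ → Word k, IsZChain k n c ∧ T = chainTab k c n

end KRF
namespace KRF

/-- A `k`-colored permutation of length `n`: a permutation `x_1 x_2 ⋯ x_n` of `{1, …, n}`
(here `x_i = perm i + 1`, using `Fin n` positions and values) together with a color
`color i ∈ {1, …, k}` attached to each entry. -/
structure ColoredPerm (n k : ℕ) : Type where
  perm : Equiv.Perm (Fin n)
  color : Fin n → ℕ
  color_pos : ∀ i, 1 ≤ color i
  color_le : ∀ i, color i ≤ k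

/-- Insertion of a value `x` of color `j` into a `k`-ribbon Fibonacci tableau: compare `x`
with the value `t` in the `k`-ribbon containing the leftmost square of the bottom row.
If the tableau is empty or `x > t`, a new leftmost height-1 column consisting of a single
`k`-ribbon of height `j` filled with `x` is created.  If `x < t`, a `k`-ribbon of height
`j` filled with `x` is placed on top of the `k`-ribbon containing `t` (which is forced to
become a `k`-ribbon of height `k + 1 - j`); if a `k`-ribbon of height `l` filled with `b`
was already on top of the ribbon containing `t`, it is bumped out and the value `b` with
color `l` is inserted recursively into the tableau formed by the columns to the right. -/
def insertVal (k : ℕ) (x j : ℕ) : Tab k → Tab k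
  | [] => [Col.single j x]
  | c :: rest =>
    if Col.bottomVal c < x then Col.single j x :: c :: rest
    else
      match c with
      | Col.single _ v => Col.double j (k + 1 - j) x v :: rest
      | Col.double ht _ vt vb => Col.double j (k + 1 - j) x vb :: insertVal k vt ht rest

/-- The insertion tableau obtained after inserting the first `i` colored entries
`x_1^{j_1}, …, x_i^{j_i}` of the `k`-colored permutation `π` into the empty tableau. -/
def PPartial (k n : ℕ) (π : ColoredPerm n k) (i : ℕ) : Tab k :=
  ((List.finRange n).take i).foldl
    (fun T m => insertVal k ((π.perm m : ℕ) + 1) (π.color m) T) []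

/-- The insertion tableau `P(π)` of a `k`-colored permutation. -/
def PTab (k n : ℕ) (π : ColoredPerm n k) : Tab k := PPartial k n π n

/-- The chain of shapes of the partial insertion tableaux of `π`. -/
def QChain (k n : ℕ) (π : ColoredPerm n k) (i : ℕ) : Word k :=
  Tab.shape (PPartial k n π i)

/-- The recording tableau `Q(π)`: it has the same shape as `P(π)`, and after the `i`-th
insertion the value `i` is placed in the `k` squares by which the shape grew at step `i`. -/
def QTab (k n : ℕ) (π : ColoredPerm n k) : Tab k := chainTab k (QChain k n π) n

end KRF
namespace KRF

/-- The content of the unit square in column `c+1` and row `r+1` (1-indexed) of the square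
diagram of `π`: `some j` if it contains an `X^j` (i.e. `π` sends position `c+1` to value
`r+1`, colored `j`), and `none` otherwise. -/
def squareX (k n : ℕ) (π : ColoredPerm n k) (c r : ℕ) : Option ℕ :=
  if h : c < n ∧ r < n then
    if (π.perm ⟨c, h.1⟩ : ℕ) = r then some (π.color ⟨c, h.1⟩) else none
  else none

/-- `g` is a labeling of the corners of the square diagram of `π` obeying Fomin's growth
rules: every corner on the left edge and the bottom edge is labeled by the empty word, and
whenever a unit square has corner labels `ν` (bottom-left), `μ₁` (top-left), `μ₂`
(bottom-right) and `λ` (top-right): (1) if `μ₁` covers `ν` and `μ₂ = ν` then `λ = μ₁`,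
and symmetrically; (2) if both `μ₁` and `μ₂` cover `ν` then `λ = 2ν`; (3) if
`μ₁ = ν = μ₂` and the square contains an `X^j` then `λ = 1_j ν`; (4) if `μ₁ = ν = μ₂` and
the square contains no `X` then `λ = ν`. -/
def GrowthSpec (k n : ℕ) (π : ColoredPerm n k) (g : ℕ → ℕ → Word k) : Prop :=
  (∀ r, r ≤ n → g 0 r = []) ∧ (∀ c, c ≤ n → g c 0 = []) ∧
  ∀ c r, c < n → r < n →
    (ZCovers k (g c r) (g c (r + 1)) → g (c + 1) r = g c r →
      g (c + 1) (r + 1) = g c (r + 1)) ∧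
    (ZCovers k (g c r) (g (c + 1) r) → g c (r + 1) = g c r →
      g (c + 1) (r + 1) = g (c + 1) r) ∧
    (ZCovers k (g c r) (g c (r + 1)) → ZCovers k (g c r) (g (c + 1) r) →
      g (c + 1) (r + 1) = Letter.two :: g c r) ∧
    (g c (r + 1) = g c r → g (c + 1) r = g c r → ∀ j, squareX k n π c r = some j →
      g (c + 1) (r + 1) = Letter.one j :: g c r) ∧
    (g c (r + 1) = g c r → g (c + 1) r = g c r → squareX k n π c r = none →
      g (c + 1) (r + 1) = g c r)

section Words

variable {k : ℕ}

theorem twos_append_two_cons {p : Word k} (hp : ∀ l ∈ p, l = Letter.two) (s : Word k) :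
    p ++ Letter.two :: s = Letter.two :: (p ++ s) := by
  induction p with
  | nil => rfl
  | cons a p ih =>
    obtain rfl : a = Letter.two := hp a List.mem_cons_self
    rw [List.cons_append, ih fun l hl => hp l (List.mem_cons_of_mem _ hl), List.cons_append]

theorem Word.valid_nil : Word.Valid k [] := by
  simp [Word.Valid]

theorem ZCovers.rank_eq {z w : Word k} (h : ZCovers k z w) : w.rank = z.rank + 1 := by
  rcases h with ⟨p, s, j, -, -, -, rfl, rfl⟩ | ⟨p, s, j, -, -, -, rfl, rfl⟩ <;>
    simp [Word.rank, Letter.rank] <;> omega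

theorem ZCovers.ne {z w : Word k} (h : ZCovers k z w) : w ≠ z := by
  rintro rfl
  have := h.rank_eq
  omega

theorem ZCovers.valid {z w : Word k} (h : ZCovers k z w) (hz : z.Valid k) : w.Valid k := by
  rcases h with ⟨p, s, j, -, -, -, rfl, rfl⟩ | ⟨p, s, j, -, hj₁, hj₂, rfl, rfl⟩ <;>
    intro l hl <;> simp only [List.mem_append, List.mem_cons] at hl
  · rcases hl with hl | rfl | hl
    · exact hz l (by simp [hl])
    · trivial
    · exact hz l (by simp [hl])
  · rcases hl with hl | rfl | hl
    · exact hz l (by simp [hl])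
    · exact ⟨hj₁, hj₂⟩
    · exact hz l (by simp [hl])

theorem ZCovers.one_cons {j : ℕ} (hj₁ : 1 ≤ j) (hj₂ : j ≤ k) (ν : Word k) :
    ZCovers k ν (Letter.one j :: ν) :=
  Or.inr ⟨[], ν, j, by simp, hj₁, hj₂, rfl, rfl⟩

/-- Closes the diamond of rule (2): `ν ⋖ μ₁, μ₂ ⋖ 2ν`. -/
theorem ZCovers.two_cons {ν μ : Word k} (h : ZCovers k ν μ) :
    ZCovers k μ (Letter.two :: ν) := by
  rcases h with ⟨p, s, j, hp, hj₁, hj₂, rfl, rfl⟩ | ⟨p, s, j, hp, hj₁, hj₂, rfl, rfl⟩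
  · refine Or.inr ⟨Letter.two :: p, s, j, ?_, hj₁, hj₂, rfl, twos_append_two_cons hp s⟩
    simpa using hp
  · exact Or.inl ⟨p, s, j, hp, hj₁, hj₂, (twos_append_two_cons hp s).symm, rfl⟩

def CoversIf (k : ℕ) (P : Prop) (a b : Word k) : Prop :=
  (P → ZCovers k a b) ∧ (¬P → b = a)

theorem CoversIf.eq_or_zCovers {P : Prop} {a b : Word k} (h : CoversIf k P a b) :
    b = a ∨ ZCovers k a b := by
  by_cases hP : P
  · exact Or.inr (h.1 hP)
  · exact Or.inl (h.2 hP)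

end Words

section LocalRule

variable {k : ℕ}

/-- The rules of `GrowthSpec` for one square, with corners `ν` (bottom-left), `μ₁` (top-left),
`μ₂` (bottom-right), `ρ` (top-right) and content `x`; `GrowthSpec` unfolds to it. -/
def SquareRule (k : ℕ) (ν μ₁ μ₂ : Word k) (x : Option ℕ) (ρ : Word k) : Prop :=
  (ZCovers k ν μ₁ → μ₂ = ν → ρ = μ₁) ∧
  (ZCovers k ν μ₂ → μ₁ = ν → ρ = μ₂) ∧
  (ZCovers k ν μ₁ → ZCovers k ν μ₂ → ρ = Letter.two :: ν) ∧
  (μ₁ = ν → μ₂ = ν → ∀ j, x = some j → ρ = Letter.one j :: ν) ∧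
  (μ₁ = ν → μ₂ = ν → x = none → ρ = ν)

def localRule (k : ℕ) (ν μ₁ μ₂ : Word k) (x : Option ℕ) : Word k :=
  if μ₁ = ν ∧ μ₂ = ν then x.elim ν fun j => Letter.one j :: ν
  else if μ₂ = ν then μ₁ else if μ₁ = ν then μ₂ else Letter.two :: ν

theorem localRule_squareRule (ν μ₁ μ₂ : Word k) (x : Option ℕ) :
    SquareRule k ν μ₁ μ₂ x (localRule k ν μ₁ μ₂ x) := by
  refine ⟨fun h₁ h₂ => ?_, fun h₂ h₁ => ?_, fun h₁ h₂ => ?_, fun h₁ h₂ j hx => ?_,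
    fun h₁ h₂ hx => ?_⟩
  · simp [localRule, h₁.ne, h₂]
  · simp [localRule, h₂.ne, h₁]
  · simp [localRule, h₁.ne, h₂.ne]
  · simp [localRule, h₁, h₂, hx]
  · simp [localRule, h₁, h₂, hx]

theorem SquareRule.unique {ν μ₁ μ₂ ρ ρ' : Word k} {x : Option ℕ}
    (h₁ : μ₁ = ν ∨ ZCovers k ν μ₁) (h₂ : μ₂ = ν ∨ ZCovers k ν μ₂)
    (h : SquareRule k ν μ₁ μ₂ x ρ) (h' : SquareRule k ν μ₁ μ₂ x ρ') : ρ = ρ' := by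
  rcases h₁ with e₁ | c₁ <;> rcases h₂ with e₂ | c₂
  · cases x with
    | none => rw [h.2.2.2.2 e₁ e₂ rfl, h'.2.2.2.2 e₁ e₂ rfl]
    | some j => rw [h.2.2.2.1 e₁ e₂ j rfl, h'.2.2.2.1 e₁ e₂ j rfl]
  · rw [h.2.1 c₂ e₁, h'.2.1 c₂ e₁]
  · rw [h.1 c₁ e₂, h'.1 c₁ e₂]
  · rw [h.2.2.1 c₁ c₂, h'.2.2.1 c₁ c₂]

theorem coversIf_localRule {R C : Prop} {ν μ₁ μ₂ : Word k} {x : Option ℕ}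
    (h₁ : CoversIf k R ν μ₁) (h₂ : CoversIf k C ν μ₂)
    (hx : ∀ j, x = some j → (1 ≤ j ∧ j ≤ k) ∧ ¬R ∧ ¬C) :
    CoversIf k (C ∨ x.isSome) μ₁ (localRule k ν μ₁ μ₂ x) ∧
      CoversIf k (R ∨ x.isSome) μ₂ (localRule k ν μ₁ μ₂ x) := by
  by_cases hR : R <;> by_cases hC : C
  · have c₁ := h₁.1 hR
    have c₂ := h₂.1 hC
    have hρ : localRule k ν μ₁ μ₂ x = Letter.two :: ν := (localRule_squareRule ..).2.2.1 c₁ c₂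
    rw [hρ]
    exact ⟨⟨fun _ => c₁.two_cons, fun h => absurd (Or.inl hC) h⟩,
      ⟨fun _ => c₂.two_cons, fun h => absurd (Or.inl hR) h⟩⟩
  · obtain rfl : x = none := Option.eq_none_iff_forall_ne_some.2 fun j hj => (hx j hj).2.1 hR
    have e₂ := h₂.2 hC
    rw [(localRule_squareRule ..).1 (h₁.1 hR) e₂]
    exact ⟨⟨fun h => by simp_all, fun _ => rfl⟩,
      ⟨fun _ => e₂ ▸ h₁.1 hR, fun h => absurd (Or.inl hR) h⟩⟩
  · obtain rfl : x = none := Option.eq_none_iff_forall_ne_some.2 fun j hj => (hx j hj).2.2 hC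
    have e₁ := h₁.2 hR
    rw [(localRule_squareRule ..).2.1 (h₂.1 hC) e₁]
    exact ⟨⟨fun _ => e₁ ▸ h₂.1 hC, fun h => absurd (Or.inl hC) h⟩,
      ⟨fun h => by simp_all, fun _ => rfl⟩⟩
  · have e₁ := h₁.2 hR
    have e₂ := h₂.2 hC
    cases x with
    | none =>
      rw [(localRule_squareRule ..).2.2.2.2 e₁ e₂ rfl]
      exact ⟨⟨fun h => by simp_all, fun _ => e₁.symm⟩,
        ⟨fun h => by simp_all, fun _ => e₂.symm⟩⟩
    | some j =>
      obtain ⟨⟨hj₁, hj₂⟩, -⟩ := hx j rfl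
      rw [(localRule_squareRule ..).2.2.2.1 e₁ e₂ j rfl, e₁, e₂]
      simp only [Option.isSome_some, or_true, not_true_eq_false, CoversIf]
      exact ⟨⟨fun _ => .one_cons hj₁ hj₂ ν, False.elim⟩, ⟨fun _ => .one_cons hj₁ hj₂ ν, False.elim⟩⟩

end LocalRule

section Diagram

variable {k n : ℕ} (π : ColoredPerm n k)

def HasXLeft (c r : ℕ) : Prop := ∃ c' < c, (squareX k n π c' r).isSome

def HasXBelow (c r : ℕ) : Prop := ∃ r' < r, (squareX k n π c r').isSome

variable {π}

theorem squareX_isSome_iff {c r : ℕ} :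
    (squareX k n π c r).isSome ↔ ∃ h : c < n, (π.perm ⟨c, h⟩ : ℕ) = r := by
  unfold squareX
  split_ifs with h h'
  · simp [h.1, h']
  · simp [h.1, h']
  · simp only [Option.isSome_none, Bool.false_eq_true, false_iff, not_exists]
    exact fun hc => ((π.perm ⟨c, hc⟩).is_lt.trans_le (not_and.1 h hc |> le_of_not_gt)).ne

theorem squareX_color {c r j : ℕ} (h : squareX k n π c r = some j) : 1 ≤ j ∧ j ≤ k := by
  unfold squareX at h
  split_ifs at h
  cases h
  exact ⟨π.color_pos _, π.color_le _⟩

theorem squareX_isSome_eq_iff {c r c' r' : ℕ} (h : (squareX k n π c r).isSome)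
    (h' : (squareX k n π c' r').isSome) : c = c' ↔ r = r' := by
  obtain ⟨hc, rfl⟩ := squareX_isSome_iff.1 h
  obtain ⟨hc', rfl⟩ := squareX_isSome_iff.1 h'
  rw [Fin.val_inj, π.perm.injective.eq_iff, Fin.mk.injEq]

theorem not_hasXLeft_of_isSome {c r : ℕ} (h : (squareX k n π c r).isSome) :
    ¬HasXLeft π c r := fun ⟨_, hc', h'⟩ => hc'.ne ((squareX_isSome_eq_iff h' h).2 rfl)

theorem not_hasXBelow_of_isSome {c r : ℕ} (h : (squareX k n π c r).isSome) :
    ¬HasXBelow π c r := fun ⟨_, hr', h'⟩ => hr'.ne ((squareX_isSome_eq_iff h' h).1 rfl)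

theorem hasXLeft_succ (c r : ℕ) :
    HasXLeft π (c + 1) r ↔ HasXLeft π c r ∨ (squareX k n π c r).isSome := by
  simp only [HasXLeft, Nat.lt_succ_iff_lt_or_eq, or_and_right, exists_or, exists_eq_left]

theorem hasXBelow_succ (c r : ℕ) :
    HasXBelow π c (r + 1) ↔ HasXBelow π c r ∨ (squareX k n π c r).isSome := by
  simp only [HasXBelow, Nat.lt_succ_iff_lt_or_eq, or_and_right, exists_or, exists_eq_left]

theorem hasXLeft_of_le {c r : ℕ} (hr : r < n) (hc : n ≤ c) : HasXLeft π c r := by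
  refine ⟨π.perm.symm ⟨r, hr⟩, (Fin.is_lt _).trans_le hc, squareX_isSome_iff.2 ⟨Fin.is_lt _, ?_⟩⟩
  simp

theorem hasXBelow_of_le {c r : ℕ} (hc : c < n) (hr : n ≤ r) : HasXBelow π c r :=
  ⟨π.perm ⟨c, hc⟩, (Fin.is_lt _).trans_le hr, squareX_isSome_iff.2 ⟨hc, rfl⟩⟩

end Diagram

def growth (k n : ℕ) (π : ColoredPerm n k) : ℕ → ℕ → Word k
  | 0, _ => []
  | _ + 1, 0 => []
  | c + 1, r + 1 =>
    localRule k (growth k n π c r) (growth k n π c (r + 1)) (growth k n π (c + 1) r)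
      (squareX k n π c r)

section Growth

variable {k n : ℕ} (π : ColoredPerm n k)

theorem growth_zero_left (r : ℕ) : growth k n π 0 r = [] := by
  rw [growth]

theorem growth_zero_right (c : ℕ) : growth k n π c 0 = [] := by
  cases c <;> rw [growth]

theorem growth_succ_succ (c r : ℕ) :
    growth k n π (c + 1) (r + 1) =
      localRule k (growth k n π c r) (growth k n π c (r + 1)) (growth k n π (c + 1) r)
        (squareX k n π c r) := by
  rw [growth]

theorem growth_growthSpec : GrowthSpec k n π (growth k n π) := by
  refine ⟨fun r _ => growth_zero_left π r, fun c _ => growth_zero_right π c, fun c r _ _ => ?_⟩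
  rw [growth_succ_succ]
  exact localRule_squareRule ..

theorem coversIf_growth_succ {c r : ℕ}
    (h : CoversIf k (HasXLeft π c r) (growth k n π c r) (growth k n π c (r + 1)) ∧
      CoversIf k (HasXBelow π c r) (growth k n π c r) (growth k n π (c + 1) r)) :
    CoversIf k (HasXLeft π (c + 1) r) (growth k n π (c + 1) r)
        (growth k n π (c + 1) (r + 1)) ∧
      CoversIf k (HasXBelow π c (r + 1)) (growth k n π c (r + 1))
        (growth k n π (c + 1) (r + 1)) := by
  rw [hasXLeft_succ, hasXBelow_succ, growth_succ_succ]
  refine (coversIf_localRule h.1 h.2 fun _ hj => ?_).symm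
  have hx : (squareX k n π c r).isSome := by simp [hj]
  exact ⟨squareX_color hj, not_hasXLeft_of_isSome hx, not_hasXBelow_of_isSome hx⟩

theorem growth_coversIf (c r : ℕ) :
    CoversIf k (HasXLeft π c r) (growth k n π c r) (growth k n π c (r + 1)) ∧
      CoversIf k (HasXBelow π c r) (growth k n π c r) (growth k n π (c + 1) r) :=
  ⟨match c with
    | 0 => ⟨fun ⟨_, h, _⟩ => absurd h (Nat.not_lt_zero _), fun _ => by
        rw [growth_zero_left, growth_zero_left]⟩
    | c + 1 => (coversIf_growth_succ π (growth_coversIf c r)).1,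
   match r with
    | 0 => ⟨fun ⟨_, h, _⟩ => absurd h (Nat.not_lt_zero _), fun _ => by
        rw [growth_zero_right, growth_zero_right]⟩
    | r + 1 => (coversIf_growth_succ π (growth_coversIf c r)).2⟩
termination_by c + r

variable {π}

theorem growth_valid (c r : ℕ) : Word.Valid k (growth k n π c r) := by
  induction c with
  | zero => exact growth_zero_left π r ▸ Word.valid_nil
  | succ c ih =>
    rcases (growth_coversIf π c r).2.eq_or_zCovers with h | h
    · exact h ▸ ih
    · exact h.valid ih

theorem rank_growth_right {r : ℕ} (hr : r ≤ n) : (growth k n π n r).rank = r := by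
  induction r with
  | zero => rw [growth_zero_right]; rfl
  | succ r ih =>
    rw [((growth_coversIf π n r).1.1 (hasXLeft_of_le hr le_rfl)).rank_eq, ih (by omega)]

theorem GrowthSpec.eq_growth {g : ℕ → ℕ → Word k} (hg : GrowthSpec k n π g) :
    ∀ c r, c ≤ n → r ≤ n → g c r = growth k n π c r
  | 0, r, _, hr => (hg.1 r hr).trans (growth_zero_left π r).symm
  | c + 1, 0, hc, _ => (hg.2.1 _ hc).trans (growth_zero_right π _).symm
  | c + 1, r + 1, hc, hr => by
    have hsq : SquareRule k (g c r) (g c (r + 1)) (g (c + 1) r) (squareX k n π c r)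
        (g (c + 1) (r + 1)) := hg.2.2 c r hc hr
    rw [hg.eq_growth c r (by omega) (by omega), hg.eq_growth c (r + 1) (by omega) hr,
      hg.eq_growth (c + 1) r hc (by omega)] at hsq
    rw [growth_succ_succ]
    exact hsq.unique (growth_coversIf π c r).1.eq_or_zCovers
      (growth_coversIf π c r).2.eq_or_zCovers (localRule_squareRule ..)

end Growth

theorem growthSpec_wellDefined_general (k n : ℕ) (π : ColoredPerm n k) :
    (∃ g, GrowthSpec k n π g) ∧
    (∀ g g', GrowthSpec k n π g → GrowthSpec k n π g' →
      ∀ c ≤ n, ∀ r ≤ n, g c r = g' c r) ∧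
    (∀ g, GrowthSpec k n π g →
      (∀ c ≤ n, ∀ r < n, g c (r + 1) = g c r ∨ ZCovers k (g c r) (g c (r + 1))) ∧
      (∀ c < n, ∀ r ≤ n, g (c + 1) r = g c r ∨ ZCovers k (g c r) (g (c + 1) r)) ∧
      (∀ c ≤ n, ∀ r ≤ n, Word.Valid k (g c r)) ∧
      (∀ r < n, ZCovers k (g n r) (g n (r + 1))) ∧
      (∀ c < n, ZCovers k (g c n) (g (c + 1) n)) ∧
      g n 0 = [] ∧ g 0 n = [] ∧ Word.rank (g n n) = n) := by
  refine ⟨⟨_, growth_growthSpec π⟩, fun g g' hg hg' c hc r hr => ?_, fun g hg => ?_⟩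
  · rw [hg.eq_growth c r hc hr, hg'.eq_growth c r hc hr]
  have e := hg.eq_growth
  refine ⟨fun c hc r hr => ?_, fun c hc r hr => ?_, fun c hc r hr => ?_, fun r hr => ?_,
    fun c hc => ?_, ?_, ?_, ?_⟩
  · rw [e c r hc hr.le, e c (r + 1) hc hr]
    exact (growth_coversIf π c r).1.eq_or_zCovers
  · rw [e c r hc.le hr, e (c + 1) r hc hr]
    exact (growth_coversIf π c r).2.eq_or_zCovers
  · exact e c r hc hr ▸ growth_valid c r
  · rw [e n r le_rfl hr.le, e n (r + 1) le_rfl hr]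
    exact (growth_coversIf π n r).1.1 (hasXLeft_of_le hr le_rfl)
  · rw [e c n hc.le le_rfl, e (c + 1) n hc le_rfl]
    exact (growth_coversIf π c n).2.1 (hasXBelow_of_le hc le_rfl)
  · exact hg.2.1 n le_rfl
  · exact hg.1 n le_rfl
  · rw [e n n le_rfl le_rfl, rank_growth_right le_rfl]

/-- For every `k`-colored permutation `π` of length `n`, Fomin's
growth rules applied to the square diagram of `π` are well-defined and consistent: a
labeling obeying them exists and is unique (every corner receives a unique label in
`Z(k)`); along every horizontal or vertical edge of the array the two corner labels are
either equal or form a cover relation in `Z(k)`; and the sequences of labels read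
bottom-to-top up the right edge and left-to-right along the top edge are both saturated
chains in `Z(k)` from the empty word to the same word of rank `n` (the label of the
top-right corner). -/
theorem growthSpec_wellDefined (k n : ℕ) (hk : 1 ≤ k) (π : ColoredPerm n k) :
    (∃ g, GrowthSpec k n π g) ∧
    (∀ g g', GrowthSpec k n π g → GrowthSpec k n π g' →
      ∀ c ≤ n, ∀ r ≤ n, g c r = g' c r) ∧
    (∀ g, GrowthSpec k n π g →
      (∀ c ≤ n, ∀ r < n, g c (r + 1) = g c r ∨ ZCovers k (g c r) (g c (r + 1))) ∧
      (∀ c < n, ∀ r ≤ n, g (c + 1) r = g c r ∨ ZCovers k (g c r) (g (c + 1) r)) ∧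
      (∀ c ≤ n, ∀ r ≤ n, Word.Valid k (g c r)) ∧
      (∀ r < n, ZCovers k (g n r) (g n (r + 1))) ∧
      (∀ c < n, ZCovers k (g c n) (g (c + 1) n)) ∧
      g n 0 = [] ∧ g 0 n = [] ∧ Word.rank (g n n) = n) :=
  growthSpec_wellDefined_general k n π

end KRF
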